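/- Let X_1,…,X_n be ℝ^p-valued random vectors with means μ_i, and suppose Cov(X_i, X_j) = C(i−j) depends only on i−j (with C(−h) = C(h)ᵀ). Then for i ∈ {1,…,M+1}, E[V_i] = E[n^{-1}Σ_{h=1}^{n−i+1}(X_h − X̄)ᵀ(X_{h+i−1} − X̄)] = Σ_{j=1}^{M+1} F_{n,M}(i,j)·tr(C(j−1)) + n^{-1}Σ_{h=1}^{n−i+1}(μ_h − μ̄)ᵀ(μ_{h+i−1} − μ̄) + R, where F_{n,M} is the matrix defined below and the remainder R involves only traces tr(C(h)) with h > M. In particular, when C(h) = 0 for all |h| > M, E[V] = F_{n,M}·(tr C(0),…, tr C(M))ᵀ + V_B exactly, where V_B(i) = n^{-1}Σ_{h=1}^{n−i+1}(μ_h − μ̄)ᵀ(μ_{h+i−1} − μ̄). -/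

import Mathlib

/-!
Write `X̄` for the average of `X_1, …, X_n`. For each coordinate `k`, the expectation of
`(X_a - X̄)_k (X_b - X̄)_k` splits into `Cov((X_a - X̄)_k, (X_b - X̄)_k)` plus the product of the
centred means, and by bilinearity of the covariance the first part is a linear functional of the
autocovariance `z ↦ C(z)_{kk}`; summing over `k` makes it the same functional of `c = tr ∘ C`.
Because `c` is even and vanishes beyond lag `M`, it is the combination
`∑_{j ≤ M+1} c(j - 1) · 1{|z| = j - 1}`, so it suffices to evaluate the functional on these lag
indicators, which amounts to counting lattice points on the diagonals `|a - b| = j - 1`; the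
counts are exactly the entries `F_{n,M}(i, j)`.
-/

open MeasureTheory ProbabilityTheory Matrix Finset

/-- `Cov(Z_a - Z̄, Z_b - Z̄)` for `Z_1, …, Z_n` with `Cov(Z_r, Z_s) = c (r - s)`, as a linear
functional of the autocovariance `c`. -/
noncomputable def centeredLagCov (n a b : ℕ) : (ℤ → ℝ) →ₗ[ℝ] ℝ :=
  LinearMap.proj ((a : ℤ) - b) - (n : ℝ)⁻¹ • ∑ s ∈ Icc 1 n, LinearMap.proj ((a : ℤ) - s)
    - (n : ℝ)⁻¹ • ∑ r ∈ Icc 1 n, LinearMap.proj ((r : ℤ) - b)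
    + ((n : ℝ)⁻¹ * (n : ℝ)⁻¹) • ∑ r ∈ Icc 1 n, ∑ s ∈ Icc 1 n, LinearMap.proj ((r : ℤ) - s)

theorem centeredLagCov_apply (n a b : ℕ) (c : ℤ → ℝ) :
    centeredLagCov n a b c = c (a - b) - (n : ℝ)⁻¹ * ∑ s ∈ Icc 1 n, c (a - s)
      - (n : ℝ)⁻¹ * ∑ r ∈ Icc 1 n, c (r - b)
      + (n : ℝ)⁻¹ * (n : ℝ)⁻¹ * ∑ r ∈ Icc 1 n, ∑ s ∈ Icc 1 n, c (r - s) := by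
  simp [centeredLagCov, LinearMap.sum_apply]

def lagIndicator (j : ℕ) (z : ℤ) : ℝ := if z.natAbs + 1 = j then 1 else 0

theorem eq_sum_lagIndicator {M : ℕ} {c : ℤ → ℝ} (heven : ∀ z, c (-z) = c z)
    (hvanish : ∀ z, (M : ℤ) < |z| → c z = 0) :
    c = ∑ j ∈ Icc 1 (M + 1), c ((j : ℤ) - 1) • lagIndicator j := by
  ext z
  simp only [Finset.sum_apply, Pi.smul_apply, smul_eq_mul, lagIndicator, mul_ite, mul_one, mul_zero,
    sum_ite_eq, mem_Icc]
  split_ifs with hz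
  · push_cast
    rcases Int.natAbs_eq z with h | h <;> rw [h] <;> simp [heven]
  · exact hvanish z (by rw [Int.abs_eq_natAbs]; omega)

/-- The entry `F_{n,M}(i, j)` of the paper; it does not depend on `M`. -/
noncomputable def traceCoeff (n i j : ℕ) : ℝ :=
  (1 - ((i : ℝ) - 1) / (n : ℝ)) * (if i = j then 1 else 0)
    + (1 - ((i : ℝ) - 1) / (n : ℝ)) * (1 - ((j : ℝ) - 1) / (n : ℝ)) *
        ((2 - if j = 1 then (1 : ℝ) else 0) / (n : ℝ))
    - (1 / (n : ℝ) ^ 2) * ∑ a ∈ Icc 1 (n - i + 1), ∑ b ∈ Icc 1 n,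
        ((if ((a : ℤ) - (b : ℤ)).natAbs + 1 = j then (1 : ℝ) else 0)
          + (if ((a : ℤ) + (i : ℤ) - 1 - (b : ℤ)).natAbs + 1 = j then (1 : ℝ) else 0))

theorem sum_sum_ite_eq_add {n d : ℕ} (hd : d ≤ n) :
    ∑ r ∈ Icc 1 n, ∑ s ∈ Icc 1 n, (if r = s + d then (1 : ℝ) else 0) = n - d := by
  rw [sum_comm]
  have hinner : ∀ s ∈ Icc 1 n,
      ∑ r ∈ Icc 1 n, (if r = s + d then (1 : ℝ) else 0) = if s ∈ Icc 1 (n - d) then 1 else 0 := by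
    intro s hs
    rw [sum_ite_eq']
    simp only [mem_Icc] at hs ⊢
    exact if_congr (by omega) rfl rfl
  rw [sum_congr rfl hinner, sum_ite_mem, inter_eq_right.2 (Icc_subset_Icc le_rfl (Nat.sub_le _ _))]
  simp [Nat.cast_sub hd]

theorem sum_sum_lagIndicator {n j : ℕ} (hj : j ∈ Icc 1 n) :
    ∑ r ∈ Icc 1 n, ∑ s ∈ Icc 1 n, lagIndicator j ((r : ℤ) - s)
      = (2 - if j = 1 then (1 : ℝ) else 0) * (n - ((j : ℝ) - 1)) := by
  obtain ⟨hj1, hjn⟩ := mem_Icc.1 hj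
  -- for `j = 1` the two diagonals `r = s + (j - 1)` and `s = r + (j - 1)` coincide
  have hsplit : ∀ r s : ℕ, lagIndicator j ((r : ℤ) - s)
      = (if r = s + (j - 1) then 1 else 0) + (if s = r + (j - 1) then 1 else 0)
        - (if j = 1 then 1 else 0) * (if r = s + 0 then 1 else 0) := by
    intro r s
    unfold lagIndicator
    split_ifs <;> first | (exfalso; omega) | norm_num
  simp only [hsplit, sum_add_distrib, sum_sub_distrib, ← mul_sum]
  rw [sum_sum_ite_eq_add (by omega), sum_comm, sum_sum_ite_eq_add (by omega),
    sum_sum_ite_eq_add (Nat.zero_le n), Nat.cast_sub (by omega)]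
  split_ifs with h1
  · subst h1; push_cast; ring
  · ring

theorem sum_centeredLagCov_lagIndicator {n i j : ℕ} (hi : i ∈ Icc 1 n) (hj : j ∈ Icc 1 n) :
    (n : ℝ)⁻¹ * ∑ h ∈ Icc 1 (n - i + 1), centeredLagCov n h (h + i - 1) (lagIndicator j)
      = traceCoeff n i j := by
  obtain ⟨hi1, hin⟩ := mem_Icc.1 hi
  have hlag : ∑ h ∈ Icc 1 (n - i + 1), lagIndicator j (h - ((h + i - 1 : ℕ) : ℤ))
      = ((n : ℝ) - i + 1) * if i = j then 1 else 0 := by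
    have hconst : ∀ h : ℕ, lagIndicator j (h - ((h + i - 1 : ℕ) : ℤ)) = if i = j then 1 else 0 :=
      fun h => if_congr (by omega) rfl rfl
    simp only [hconst, sum_const, Nat.card_Icc, nsmul_eq_mul]
    push_cast [Nat.cast_sub hin]
    ring
  have hreflect : ∀ h r : ℕ, lagIndicator j (r - ((h + i - 1 : ℕ) : ℤ))
      = if ((h : ℤ) + i - 1 - r).natAbs + 1 = j then 1 else 0 :=
    fun h r => if_congr (by omega) rfl rfl
  have hcard : ((Icc 1 (n - i + 1)).card : ℝ) = n - i + 1 := by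
    rw [Nat.card_Icc]; push_cast [Nat.cast_sub hin]; ring
  simp only [centeredLagCov_apply, sum_add_distrib, sum_sub_distrib, ← mul_sum]
  rw [hlag]
  simp only [hreflect, sum_const, hcard, nsmul_eq_mul, sum_sum_lagIndicator hj, traceCoeff,
    sum_add_distrib]
  simp only [lagIndicator]
  have hn : (n : ℝ) ≠ 0 := by norm_cast; omega
  field_simp
  ring

theorem sum_centeredLagCov_eq_sum_traceCoeff {n M i : ℕ} {c : ℤ → ℝ} (hM : M < n)
    (heven : ∀ z, c (-z) = c z) (hvanish : ∀ z, (M : ℤ) < |z| → c z = 0)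
    (hi : i ∈ Icc 1 (M + 1)) :
    (n : ℝ)⁻¹ * ∑ h ∈ Icc 1 (n - i + 1), centeredLagCov n h (h + i - 1) c
      = ∑ j ∈ Icc 1 (M + 1), traceCoeff n i j * c ((j : ℤ) - 1) := by
  have hIcc : Icc 1 (M + 1) ⊆ Icc 1 n := Icc_subset_Icc le_rfl hM
  conv_lhs => rw [eq_sum_lagIndicator heven hvanish]
  simp only [map_sum, map_smul, smul_eq_mul]
  rw [sum_comm, mul_sum]
  refine sum_congr rfl fun j hj => ?_
  rw [← mul_sum, mul_left_comm, sum_centeredLagCov_lagIndicator (hIcc hi) (hIcc hj), mul_comm]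

section Centering

variable {Ω : Type*} [MeasurableSpace Ω] {P : Measure Ω} {Z : ℕ → Ω → ℝ} {s : Finset ℕ}

theorem memLp_sub_mul_sum (w : ℝ) (hZ : ∀ r ∈ s, MemLp (Z r) 2 P) {a : ℕ}
    (ha : MemLp (Z a) 2 P) :
    MemLp (fun ω => Z a ω - w * ∑ r ∈ s, Z r ω) 2 P :=
  ha.sub ((memLp_finsetSum s hZ).const_mul w)

theorem integrable_sub_mul_sum_mul_sub_mul_sum (w : ℝ) (hZ : ∀ r ∈ s, MemLp (Z r) 2 P)
    {a b : ℕ} (ha : MemLp (Z a) 2 P) (hb : MemLp (Z b) 2 P) :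
    Integrable (fun ω => (Z a ω - w * ∑ r ∈ s, Z r ω) * (Z b ω - w * ∑ r ∈ s, Z r ω)) P :=
  (memLp_sub_mul_sum w hZ ha).integrable_mul (memLp_sub_mul_sum w hZ hb)

theorem integral_sub_mul_sum (w : ℝ) (hZ : ∀ r ∈ s, Integrable (Z r) P) {a : ℕ}
    (ha : Integrable (Z a) P) :
    P[fun ω => Z a ω - w * ∑ r ∈ s, Z r ω] = P[Z a] - w * ∑ r ∈ s, P[Z r] := by
  rw [integral_sub ha ((integrable_finsetSum s hZ).const_mul w), integral_const_mul,
    integral_finsetSum s hZ]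

theorem covariance_sub_mul_sum [IsFiniteMeasure P] (w : ℝ) (hZ : ∀ r ∈ s, MemLp (Z r) 2 P)
    {a b : ℕ} (ha : MemLp (Z a) 2 P) (hb : MemLp (Z b) 2 P) :
    cov[fun ω => Z a ω - w * ∑ r ∈ s, Z r ω, fun ω => Z b ω - w * ∑ r ∈ s, Z r ω; P]
      = cov[Z a, Z b; P] - w * ∑ r ∈ s, cov[Z a, Z r; P] - w * ∑ r ∈ s, cov[Z r, Z b; P]
        + w * w * ∑ r ∈ s, ∑ t ∈ s, cov[Z r, Z t; P] := by
  have hS : MemLp (fun ω => ∑ r ∈ s, Z r ω) 2 P := memLp_finsetSum s hZ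
  rw [covariance_fun_sub_fun_sub ha (hS.const_mul w) hb (hS.const_mul w),
    covariance_const_mul_left, covariance_const_mul_right, covariance_const_mul_left,
    covariance_const_mul_right, covariance_fun_sum_left' hZ hb, covariance_fun_sum_right' hZ ha,
    covariance_fun_sum_left' hZ hS,
    sum_congr rfl fun r hr => covariance_fun_sum_right' hZ (hZ r hr)]
  ring

theorem integral_sub_average_mul_sub_average [IsProbabilityMeasure P] {n a b : ℕ} {c : ℤ → ℝ}
    (hZ : ∀ r ∈ Icc 1 n, MemLp (Z r) 2 P)
    (hc : ∀ r ∈ Icc 1 n, ∀ t ∈ Icc 1 n, cov[Z r, Z t; P] = c (r - t))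
    (ha : a ∈ Icc 1 n) (hb : b ∈ Icc 1 n) :
    ∫ ω, (Z a ω - (n : ℝ)⁻¹ * ∑ r ∈ Icc 1 n, Z r ω) *
        (Z b ω - (n : ℝ)⁻¹ * ∑ r ∈ Icc 1 n, Z r ω) ∂P
      = centeredLagCov n a b c
        + (P[Z a] - (n : ℝ)⁻¹ * ∑ r ∈ Icc 1 n, P[Z r]) *
            (P[Z b] - (n : ℝ)⁻¹ * ∑ r ∈ Icc 1 n, P[Z r]) := by
  have hint : ∀ r ∈ Icc 1 n, Integrable (Z r) P := fun r hr => (hZ r hr).integrable one_le_two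
  have hcov := covariance_eq_sub (memLp_sub_mul_sum (n : ℝ)⁻¹ hZ (hZ a ha))
    (memLp_sub_mul_sum (n : ℝ)⁻¹ hZ (hZ b hb))
  rw [Pi.mul_def] at hcov
  beta_reduce at hcov
  rw [eq_add_of_sub_eq hcov.symm, covariance_sub_mul_sum _ hZ (hZ a ha) (hZ b hb),
    integral_sub_mul_sum _ hint (hint a ha), integral_sub_mul_sum _ hint (hint b hb),
    centeredLagCov_apply, hc a ha b hb, sum_congr rfl fun t ht => hc a ha t ht,
    sum_congr rfl fun r hr => hc r hr b hb,
    sum_congr rfl fun r hr => sum_congr rfl fun t ht => hc r hr t ht]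

theorem integral_sum_sub_average_mul_sub_average [IsProbabilityMeasure P] {ι : Type*}
    [Fintype ι] {X : ℕ → Ω → ι → ℝ} {m : ℕ → ι → ℝ} {C : ℤ → Matrix ι ι ℝ} {n a b : ℕ}
    (hX : ∀ r ∈ Icc 1 n, ∀ k, MemLp (fun ω => X r ω k) 2 P)
    (hmean : ∀ r ∈ Icc 1 n, ∀ k, ∫ ω, X r ω k ∂P = m r k)
    (hcov : ∀ r ∈ Icc 1 n, ∀ s ∈ Icc 1 n, ∀ k,
      ∫ ω, (X r ω k - m r k) * (X s ω k - m s k) ∂P = C (r - s) k k)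
    (ha : a ∈ Icc 1 n) (hb : b ∈ Icc 1 n) :
    ∫ ω, ∑ k, (X a ω k - (n : ℝ)⁻¹ * ∑ r ∈ Icc 1 n, X r ω k) *
        (X b ω k - (n : ℝ)⁻¹ * ∑ r ∈ Icc 1 n, X r ω k) ∂P
      = centeredLagCov n a b (fun z => (C z).trace)
        + ∑ k, (m a k - (n : ℝ)⁻¹ * ∑ r ∈ Icc 1 n, m r k) *
            (m b k - (n : ℝ)⁻¹ * ∑ r ∈ Icc 1 n, m r k) := by
  have hcovk : ∀ k, ∀ r ∈ Icc 1 n, ∀ s ∈ Icc 1 n,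
      cov[fun ω => X r ω k, fun ω => X s ω k; P] = C (r - s) k k := by
    intro k r hr s hs
    rw [covariance, hmean r hr k, hmean s hs k, hcov r hr s hs k]
  have htrace : (fun z => (C z).trace) = ∑ k, fun z => C z k k := by
    ext z
    simp [Matrix.trace]
  rw [integral_finsetSum _ fun k _ => integrable_sub_mul_sum_mul_sub_mul_sum _
      (fun r hr => hX r hr k) (hX a ha k) (hX b hb k), htrace, map_sum, ← sum_add_distrib]
  refine sum_congr rfl fun k _ => ?_
  rw [integral_sub_average_mul_sub_average (c := fun z => C z k k) (fun r hr => hX r hr k)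
      (hcovk k) ha hb, hmean a ha k, hmean b hb k, sum_congr rfl fun r hr => hmean r hr k]

end Centering

theorem stmt_9_general {Ω : Type*} [MeasurableSpace Ω] (P : Measure Ω) [IsProbabilityMeasure P]
    (n p M : ℕ) (hM : M < n)
    (X : ℕ → Ω → Fin p → ℝ) (μm : ℕ → Fin p → ℝ)
    (C : ℤ → Matrix (Fin p) (Fin p) ℝ)
    (hsym : ∀ h : ℤ, C (-h) = (C h)ᵀ)
    (hzero : ∀ h : ℤ, (M : ℤ) < |h| → C h = 0)
    (hmeas : ∀ i, Measurable (X i))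
    (hmean : ∀ i ∈ Finset.Icc 1 n, ∀ k, ∫ ω, X i ω k ∂P = μm i k)
    (hcov : ∀ i ∈ Finset.Icc 1 n, ∀ j ∈ Finset.Icc 1 n, ∀ k l : Fin p,
        ∫ ω, (X i ω k - μm i k) * (X j ω l - μm j l) ∂P = C ((i : ℤ) - (j : ℤ)) k l)
    (hint : ∀ i j k l, Integrable (fun ω => X i ω k * X j ω l) P)
    (F : ℕ → ℕ → ℝ)
    (hF : ∀ i j, F i j =
        (1 - ((i : ℝ) - 1) / (n : ℝ)) * (if i = j then 1 else 0)
        + (1 - ((i : ℝ) - 1) / (n : ℝ)) * (1 - ((j : ℝ) - 1) / (n : ℝ)) *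
            ((2 - if j = 1 then (1 : ℝ) else 0) / (n : ℝ))
        - (1 / (n : ℝ) ^ 2) * ∑ a ∈ Finset.Icc 1 (n - i + 1), ∑ b ∈ Finset.Icc 1 n,
            ((if ((a : ℤ) - (b : ℤ)).natAbs + 1 = j then (1 : ℝ) else 0)
              + (if ((a : ℤ) + (i : ℤ) - 1 - (b : ℤ)).natAbs + 1 = j then (1 : ℝ) else 0))) :
    ∀ i ∈ Finset.Icc 1 (M + 1),
      ∫ ω, (n : ℝ)⁻¹ * ∑ h ∈ Finset.Icc 1 (n - i + 1), ∑ k,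
          (X h ω k - (n : ℝ)⁻¹ * ∑ a ∈ Finset.Icc 1 n, X a ω k) *
            (X (h + i - 1) ω k - (n : ℝ)⁻¹ * ∑ a ∈ Finset.Icc 1 n, X a ω k) ∂P
        = (∑ j ∈ Finset.Icc 1 (M + 1), F i j * Matrix.trace (C ((j : ℤ) - 1)))
          + (n : ℝ)⁻¹ * ∑ h ∈ Finset.Icc 1 (n - i + 1), ∑ k,
              (μm h k - (n : ℝ)⁻¹ * ∑ a ∈ Finset.Icc 1 n, μm a k) *
                (μm (h + i - 1) k - (n : ℝ)⁻¹ * ∑ a ∈ Finset.Icc 1 n, μm a k) := by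
  intro i hi
  have hX : ∀ r k, MemLp (fun ω => X r ω k) 2 P := fun r k =>
    (memLp_two_iff_integrable_sq (measurable_pi_iff.1 (hmeas r) k).aestronglyMeasurable).2
      (by simpa only [sq] using hint r r k k)
  have hlags : ∀ h ∈ Icc 1 (n - i + 1), h ∈ Icc 1 n ∧ h + i - 1 ∈ Icc 1 n := fun h hh => by
    simp only [mem_Icc] at hh hi ⊢
    omega
  rw [integral_const_mul, integral_finsetSum _ fun h _ => integrable_finsetSum _ fun k _ =>
      integrable_sub_mul_sum_mul_sub_mul_sum _ (fun r _ => hX r k) (hX h k) (hX _ k),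
    sum_congr rfl fun h hh => integral_sum_sub_average_mul_sub_average (fun r _ => hX r) hmean
      (fun r hr s hs k => hcov r hr s hs k k) (hlags h hh).1 (hlags h hh).2,
    sum_add_distrib, mul_add,
    sum_centeredLagCov_eq_sum_traceCoeff hM (fun z => by rw [hsym, trace_transpose])
      (fun z hz => by rw [hzero z hz, trace_zero]) hi]
  simp only [hF, traceCoeff]

/-- Let `X_1,…,X_n` be `ℝ^p`-valued random vectors with means `μ_i`
and `Cov(X_i, X_j) = C(i−j)` (with `C(−h) = C(h)ᵀ`), and suppose `C(h) = 0` for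
`|h| > M`. Then for `i ∈ {1,…,M+1}`,
`E[V_i] = E[n⁻¹Σ_{h=1}^{n−i+1}(X_h − X̄)ᵀ(X_{h+i−1} − X̄)]
        = Σ_{j=1}^{M+1} F_{n,M}(i,j)·tr(C(j−1)) + V_B(i)` exactly, where
`V_B(i) = n⁻¹Σ_{h=1}^{n−i+1}(μ_h − μ̄)ᵀ(μ_{h+i−1} − μ̄)` and `F_{n,M}` is the
matrix with entries
`F_{n,M}(i,j) = (1 − (i−1)/n)I(i=j) + (1 − (i−1)/n)(1 − (j−1)/n)(2 − I(j=1))/n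
 − n⁻²Σ_{a=1}^{n−i+1}Σ_{b=1}^{n}{I(|a−b|+1=j) + I(|a+i−1−b|+1=j)}`. -/
theorem stmt_9 {Ω : Type*} [MeasurableSpace Ω] (P : Measure Ω) [IsProbabilityMeasure P]
    (n p M : ℕ) (hn : 2 ≤ n) (hM : M < n)
    (X : ℕ → Ω → Fin p → ℝ) (μm : ℕ → Fin p → ℝ)
    (C : ℤ → Matrix (Fin p) (Fin p) ℝ)
    (hsym : ∀ h : ℤ, C (-h) = (C h)ᵀ)
    (hzero : ∀ h : ℤ, (M : ℤ) < |h| → C h = 0)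
    (hmeas : ∀ i, Measurable (X i))
    (hmean : ∀ i ∈ Finset.Icc 1 n, ∀ k, ∫ ω, X i ω k ∂P = μm i k)
    (hcov : ∀ i ∈ Finset.Icc 1 n, ∀ j ∈ Finset.Icc 1 n, ∀ k l : Fin p,
        ∫ ω, (X i ω k - μm i k) * (X j ω l - μm j l) ∂P = C ((i : ℤ) - (j : ℤ)) k l)
    (hint : ∀ i j k l, Integrable (fun ω => X i ω k * X j ω l) P)
    (F : ℕ → ℕ → ℝ)
    (hF : ∀ i j, F i j =
        (1 - ((i : ℝ) - 1) / (n : ℝ)) * (if i = j then 1 else 0)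
        + (1 - ((i : ℝ) - 1) / (n : ℝ)) * (1 - ((j : ℝ) - 1) / (n : ℝ)) *
            ((2 - if j = 1 then (1 : ℝ) else 0) / (n : ℝ))
        - (1 / (n : ℝ) ^ 2) * ∑ a ∈ Finset.Icc 1 (n - i + 1), ∑ b ∈ Finset.Icc 1 n,
            ((if ((a : ℤ) - (b : ℤ)).natAbs + 1 = j then (1 : ℝ) else 0)
              + (if ((a : ℤ) + (i : ℤ) - 1 - (b : ℤ)).natAbs + 1 = j then (1 : ℝ) else 0))) :
    ∀ i ∈ Finset.Icc 1 (M + 1),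
      ∫ ω, (n : ℝ)⁻¹ * ∑ h ∈ Finset.Icc 1 (n - i + 1), ∑ k,
          (X h ω k - (n : ℝ)⁻¹ * ∑ a ∈ Finset.Icc 1 n, X a ω k) *
            (X (h + i - 1) ω k - (n : ℝ)⁻¹ * ∑ a ∈ Finset.Icc 1 n, X a ω k) ∂P
        = (∑ j ∈ Finset.Icc 1 (M + 1), F i j * Matrix.trace (C ((j : ℤ) - 1)))
          + (n : ℝ)⁻¹ * ∑ h ∈ Finset.Icc 1 (n - i + 1), ∑ k,
              (μm h k - (n : ℝ)⁻¹ * ∑ a ∈ Finset.Icc 1 n, μm a k) *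
                (μm (h + i - 1) k - (n : ℝ)⁻¹ * ∑ a ∈ Finset.Icc 1 n, μm a k) :=
  stmt_9_general P n p M hM X μm C hsym hzero hmeas hmean hcov hint F hF
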